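/- arXiv:1705.02725 — 3 statements merged into one kernel-verified Lean document; each statement's English description precedes it below -/
import Mathlib

section
/- Let b − a ≥ 1, ν ≥ 0, β ∈ ℝ, μ > 2 and 0 < κ < 1/2. Then for every sufficiently small γ ∈ (0, 1] there exists a real number ω with β + γ^{−ν} a + 1/4 < ω < β + γ^{−ν} b − 1/4 such that |ω/(2π) − q/p| ≥ γ^κ/p^μ for all integers p ≥ 1 and q ∈ ℤ. -/
/-!
A frequency `ω = 2π x` with `x = n - m√2` and `1 ≤ m ≤ 420` is Diophantine with constant
`1 / (1680 p²)`: since `2p² - q²` is a nonzero integer, `√2` is badly approximable,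
`|√2 - q/p| ≥ 1/(4p²)`, and rescaling by `m` costs only a factor `m`. Small multiples of the unit
`17 - 12√2` of `ℤ[√2]` show that such `x` are `1/(4π)`-dense, while the target interval for `ω` has
length at least `1/2` once `γ ≤ 1`. Choosing `γ^κ ≤ 1/1680` and using `p^μ ≥ p²` concludes.
-/

open Real

lemma one_div_sq_le_abs_two_sub_sq (p : ℕ) (hp : 0 < p) (q : ℤ) :
    1 / (p : ℝ) ^ 2 ≤ |2 - ((q : ℝ) / p) ^ 2| := by
  have hp' : (0 : ℝ) < p := by exact_mod_cast hp
  have hne : 2 * (p : ℤ) ^ 2 - q ^ 2 ≠ 0 := by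
    intro h
    have hsq : (((|q| : ℤ) / (p : ℤ) : ℚ) : ℝ) ^ 2 = 2 := by
      push_cast
      rw [div_pow, sq_abs, div_eq_iff (by positivity)]
      exact_mod_cast (sub_eq_zero.mp h).symm
    exact irrational_sqrt_two.ne_rat ((|q| : ℤ) / (p : ℤ) : ℚ)
      (by rw [← hsq, sqrt_sq (by push_cast; positivity)])
  have hge : (1 : ℝ) ≤ |2 * (p : ℝ) ^ 2 - q ^ 2| := by exact_mod_cast Int.one_le_abs hne
  calc 1 / (p : ℝ) ^ 2 ≤ |2 * (p : ℝ) ^ 2 - q ^ 2| / p ^ 2 := by gcongr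
    _ = |(2 * (p : ℝ) ^ 2 - q ^ 2) / p ^ 2| := by rw [abs_div, abs_sq]
    _ = |2 - ((q : ℝ) / p) ^ 2| := by congr 1; field_simp

lemma one_div_four_mul_sq_le_abs_sqrt_two_sub (p : ℕ) (hp : 0 < p) (q : ℤ) :
    1 / (4 * (p : ℝ) ^ 2) ≤ |√2 - q / p| := by
  set x : ℝ := q / p
  have hp' : (1 : ℝ) ≤ p := by exact_mod_cast hp
  by_cases hfar : 1 ≤ |√2 - x|
  · calc 1 / (4 * (p : ℝ) ^ 2) ≤ 1 := by
          rw [div_le_one (by positivity)]; nlinarith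
      _ ≤ |√2 - x| := hfar
  have hsum : |√2 + x| ≤ 4 := by
    calc |√2 + x| = |2 * √2 - (√2 - x)| := by ring_nf
      _ ≤ |2 * √2| + |√2 - x| := abs_sub _ _
      _ ≤ 4 := by rw [abs_of_pos (by positivity)]; linarith [sqrt_two_lt_three_halves]
  have hprod : |2 - x ^ 2| = |√2 - x| * |√2 + x| := by
    rw [← abs_mul]; congr 1; ring_nf; rw [sq_sqrt zero_le_two]; ring
  rw [div_le_iff₀ (by positivity)]
  calc (1 : ℝ) ≤ |2 - x ^ 2| * p ^ 2 := by
        have := one_div_sq_le_abs_two_sub_sq p hp q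
        rwa [div_le_iff₀ (by positivity)] at this
    _ ≤ |√2 - x| * (4 * (p : ℝ) ^ 2) := by
        rw [hprod, mul_assoc]; gcongr

lemma one_div_four_mul_mul_sq_le_abs_int_sub_nat_mul_sqrt_two_sub (n : ℤ) (m p : ℕ)
    (hm : 0 < m) (hp : 0 < p) (q : ℤ) :
    1 / (4 * m * (p : ℝ) ^ 2) ≤ |(n - m * √2) - q / p| := by
  have hm' : (0 : ℝ) < m := by exact_mod_cast hm
  have hp' : (0 : ℝ) < p := by exact_mod_cast hp
  have key := one_div_four_mul_sq_le_abs_sqrt_two_sub (m * p) (Nat.mul_pos hm hp) (n * p - q)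
  have hrw : (n - m * √2) - q / p = -(m * (√2 - ((n * p - q : ℤ) : ℝ) / ((m * p : ℕ) : ℝ))) := by
    push_cast; field_simp; ring
  rw [hrw, abs_neg, abs_mul, abs_of_pos hm']
  calc 1 / (4 * m * (p : ℝ) ^ 2) = m * (1 / (4 * ((m * p : ℕ) : ℝ) ^ 2)) := by
        push_cast; field_simp
    _ ≤ _ := by gcongr

lemma exists_nat_mul_mem_Ioc (s r : ℝ) (hs : 0 < s) (hr : 0 ≤ r) :
    ∃ k : ℕ, 0 < k ∧ (k : ℝ) ≤ r / s + 1 ∧ r < k * s ∧ k * s ≤ r + s := by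
  refine ⟨⌊r / s⌋₊ + 1, Nat.succ_pos _, ?_, ?_, ?_⟩
  · push_cast; linarith [Nat.floor_le (div_nonneg hr hs.le)]
  · rw [← div_lt_iff₀ hs]; push_cast; exact Nat.lt_floor_add_one _
  · push_cast
    have := Nat.floor_le (div_nonneg hr hs.le)
    rw [le_div_iff₀ hs] at this
    linarith

/-- The unit `s = 17 - 12√2 = (√2 - 1)⁴` of `ℤ[√2]` is small, with `1 / s = 17 + 12√2 < 36`, so
the points `⌊A⌋ + k s`, `1 ≤ k ≤ 35`, cross `(A, A + δ)`; they have the form `n - 12 k √2`. -/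
lemma exists_int_sub_nat_mul_sqrt_two_mem_Ioo (A δ : ℝ) (hδ : 17 - 12 * √2 < δ) :
    ∃ (n : ℤ) (m : ℕ), 0 < m ∧ m ≤ 420 ∧ A < n - m * √2 ∧ n - m * √2 < A + δ := by
  set s : ℝ := 17 - 12 * √2
  have hsq : √2 * √2 = 2 := mul_self_sqrt zero_le_two
  have hs : 0 < s := by nlinarith [sqrt_two_lt_three_halves]
  have hs_inv : 1 / s = 17 + 12 * √2 := by
    rw [div_eq_iff hs.ne']; linear_combination 144 * hsq
  obtain ⟨k, hk, hk_le, hlo, hhi⟩ := exists_nat_mul_mem_Ioc s (Int.fract A) hs (Int.fract_nonneg A)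
  have hk35 : k ≤ 35 := by
    have : (k : ℝ) < 36 := by
      calc (k : ℝ) ≤ Int.fract A / s + 1 := hk_le
        _ < 1 / s + 1 := by gcongr; exact Int.fract_lt_one A
        _ < 36 := by rw [hs_inv]; linarith [sqrt_two_lt_three_halves]
    have : k < 36 := by exact_mod_cast this
    omega
  have hval : ((⌊A⌋ + 17 * k : ℤ) : ℝ) - ((12 * k : ℕ) : ℝ) * √2 = ⌊A⌋ + k * s := by
    push_cast; ring
  refine ⟨⌊A⌋ + 17 * k, 12 * k, by omega, by omega, ?_, ?_⟩ <;> rw [hval]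
  · linarith [Int.floor_add_fract A]
  · linarith [Int.floor_add_fract A]

lemma seventeen_sub_twelve_mul_sqrt_two_lt : 17 - 12 * √2 < 1 / (4 * π) := by
  have h2 : (1.4142 : ℝ) < √2 := by
    rw [lt_sqrt (by norm_num)]; norm_num
  rw [lt_div_iff₀ (by positivity)]
  nlinarith [pi_lt_d2, pi_pos]

theorem large_twist_frequency_exists_general
    (a b ν β μ κ : ℝ) (hab : 1 ≤ b - a) (hν : 0 ≤ ν)
    (hμ : 2 < μ) (hκ0 : 0 < κ) :
    ∃ γ₀ > 0, ∀ γ : ℝ, 0 < γ → γ ≤ γ₀ → γ ≤ 1 →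
      ∃ ω : ℝ,
        β + γ ^ (-ν) * a + 1 / 4 < ω ∧
        ω < β + γ ^ (-ν) * b - 1 / 4 ∧
        ∀ p : ℕ, 1 ≤ p → ∀ q : ℤ,
          γ ^ κ / (p : ℝ) ^ μ ≤ |ω / (2 * Real.pi) - (q : ℝ) / (p : ℝ)| := by
  refine ⟨(1 / 1680) ^ κ⁻¹, by positivity, fun γ hγ hγ₀ hγ1 => ?_⟩
  have hγκ : γ ^ κ ≤ 1 / 1680 := by
    calc γ ^ κ ≤ ((1 / 1680 : ℝ) ^ κ⁻¹) ^ κ := by gcongr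
      _ = 1 / 1680 := by rw [← rpow_mul (by norm_num), inv_mul_cancel₀ hκ0.ne', rpow_one]
  have hwide : 1 ≤ γ ^ (-ν) * (b - a) :=
    one_le_mul_of_one_le_of_one_le (one_le_rpow_of_pos_of_le_one_of_nonpos hγ hγ1 (by linarith)) hab
  obtain ⟨n, m, hm, hm420, hlo, hhi⟩ := exists_int_sub_nat_mul_sqrt_two_mem_Ioo
    ((β + γ ^ (-ν) * a + 1 / 4) / (2 * π)) _ seventeen_sub_twelve_mul_sqrt_two_lt
  refine ⟨2 * π * (n - m * √2), ?_, ?_, fun p hp q => ?_⟩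
  · rwa [div_lt_iff₀' (by positivity)] at hlo
  · have : 2 * π * (n - m * √2) < β + γ ^ (-ν) * a + 3 / 4 := by
      calc _ < 2 * π * ((β + γ ^ (-ν) * a + 1 / 4) / (2 * π) + 1 / (4 * π)) := by gcongr
        _ = _ := by field_simp; ring
    linarith
  · have hp' : (1 : ℝ) ≤ p := by exact_mod_cast hp
    rw [mul_div_cancel_left₀ _ (by positivity)]
    calc γ ^ κ / (p : ℝ) ^ μ ≤ (1 / 1680) / (p : ℝ) ^ (2 : ℕ) := by
          rw [← rpow_natCast]; gcongr; norm_num; linarith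
      _ ≤ 1 / (4 * m * (p : ℝ) ^ 2) := by
          rw [div_div]; gcongr; norm_cast; omega
      _ ≤ _ := one_div_four_mul_mul_sq_le_abs_int_sub_nat_mul_sqrt_two_sub n m p hm hp q

/-- For every sufficiently small `γ ∈ (0,1]` there exists `ω` in the interval
`(β + γ^{-ν} a + 1/4, β + γ^{-ν} b - 1/4)` satisfying the Diophantine condition
`|ω/(2π) - q/p| ≥ γ^κ / p^μ` for all integers `p ≥ 1`, `q`. -/
theorem large_twist_frequency_exists
    (a b ν β μ κ : ℝ) (hab : 1 ≤ b - a) (hν : 0 ≤ ν)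
    (hμ : 2 < μ) (hκ0 : 0 < κ) (hκ : κ < 1 / 2) :
    ∃ γ₀ > 0, ∀ γ : ℝ, 0 < γ → γ ≤ γ₀ → γ ≤ 1 →
      ∃ ω : ℝ,
        β + γ ^ (-ν) * a + 1 / 4 < ω ∧
        ω < β + γ ^ (-ν) * b - 1 / 4 ∧
        ∀ p : ℕ, 1 ≤ p → ∀ q : ℤ,
          γ ^ κ / (p : ℝ) ^ μ ≤ |ω / (2 * Real.pi) - (q : ℝ) / (p : ℝ)| :=
  large_twist_frequency_exists_general a b ν β μ κ hab hν hμ hκ0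
end

section
/- Invertibility of the KAM coordinate change. Let ν ≥ 0, 0 < κ < 1/2, 0 < γ ≤ 1, 0 < r₊ < r, 0 < s₊ < s with 7 s₊ < s < (γ^κ/6)(r − r₊), let δ = (r − r₊)/6, ρ = (s − s₊)/6, and set D_j = D(r − jδ, s − jρ) for 0 ≤ j ≤ 6. Let u, v be analytic on D₃, 2π-periodic in ξ, satisfying γ^{ν+κ}|u| + |v| ≤ γ^ν ϑ s on D₃, γ^{ν+κ}|D_ξ u| + |D_ξ v| ≤ γ^ν ϑ on D₃, and γ^{ν+κ}|D_η u| + |D_η v| ≤ ϑ on D₃, with 0 ≤ ϑ < 1/8. Then for every (x, y) ∈ D₄ there exists a unique (ξ, η) ∈ D₃ with x = ξ + u(ξ, η) and y = η + v(ξ, η); moreover γ^{ν+κ}|ξ − x| + |η − y| ≤ (ϑ/(1 − ϑ)) γ^ν s. -/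
/-!
Solutions of `x = ξ + u(ξ, η)`, `y = η + v(ξ, η)` are the fixed points of
`Φ(ξ, η) = (x - u(ξ, η), y - v(ξ, η))`. Measure distances by the weighted norm
`γ^{ν+κ}|Δξ| + |Δη|`. The bound on `(u, v)` makes `Φ` map every point of `D₃` into the box
`|ξ - x| ≤ ϑ s / γ^κ`, `|η - y| ≤ γ^ν ϑ s`, and on that box `Φ` is a `1/7`-contraction: in `η`
by the assumed derivative bound, in `ξ` by a Cauchy estimate on discs of radius `7δ/8`, which
stay inside `D₃` because `8 ϑ s < s < γ^κ δ`. Banach's fixed point theorem then gives the unique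
preimage, and the distance estimate is `γ^{ν+κ}|u| + |v| ≤ γ^ν ϑ s` at the fixed point.
-/

/-- The complex domain `D(r, ρ)` around the center `c`:
`{(ξ, η) : |Im ξ| < r, |η - c| < ρ}`. -/
def Dom (r ρ : ℝ) (c : ℂ) : Set (ℂ × ℂ) :=
  {z | |z.1.im| < r ∧ ‖z.2 - c‖ < ρ}

open Metric Set Filter Topology

section WeightedDist

variable {E F : Type*} [NormedAddCommGroup E] [NormedAddCommGroup F]

def weightedDist (a : ℝ) (w w' : E × F) : ℝ := a * ‖w.1 - w'.1‖ + ‖w.2 - w'.2‖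

lemma weightedDist_comm (a : ℝ) (w w' : E × F) : weightedDist a w w' = weightedDist a w' w := by
  simp only [weightedDist, norm_sub_rev]

lemma dist_le_mul_weightedDist {a : ℝ} (ha : 0 < a) (w w' : E × F) :
    dist w w' ≤ (a⁻¹ + 1) * weightedDist a w w' := by
  have h₁ : ‖w.1 - w'.1‖ = a⁻¹ * (a * ‖w.1 - w'.1‖) := by field_simp
  have ha_inv : 0 ≤ a⁻¹ := by positivity
  rw [Prod.dist_eq, dist_eq_norm, dist_eq_norm, weightedDist]
  apply max_le <;> nlinarith [norm_nonneg (w.1 - w'.1), norm_nonneg (w.2 - w'.2)]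

lemma eq_of_weightedDist_le_mul {a K : ℝ} (ha : 0 < a) (hK : K < 1) {w w' : E × F}
    (h : weightedDist a w w' ≤ K * weightedDist a w w') : w = w' := by
  have hnonneg : 0 ≤ weightedDist a w w' := by unfold weightedDist; positivity
  have hzero : weightedDist a w w' = 0 := by nlinarith
  refine dist_le_zero.1 ((dist_le_mul_weightedDist ha w w').trans ?_)
  rw [hzero, mul_zero]

theorem exists_fixedPoint_of_weightedDist_le [CompleteSpace E] [CompleteSpace F]
    {a K : ℝ} (ha : 0 < a) (hK0 : 0 ≤ K) (hK : K < 1) {X : Set (E × F)} (hX : IsClosed X)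
    {Φ : E × F → E × F} (hΦX : MapsTo Φ X X) (hΦc : ContinuousOn Φ X)
    (hΦ : ∀ w ∈ X, ∀ w' ∈ X, weightedDist a (Φ w) (Φ w') ≤ K * weightedDist a w w')
    {w₀ : E × F} (hw₀ : w₀ ∈ X) : ∃ w ∈ X, Φ w = w := by
  set p : ℕ → E × F := fun n => Φ^[n] w₀
  have hpX : ∀ n, p n ∈ X := fun n => hΦX.iterate n hw₀
  have hp_succ : ∀ n, p (n + 1) = Φ (p n) := fun n => Function.iterate_succ_apply' Φ n w₀
  have hstep : ∀ n, weightedDist a (p n) (p (n + 1)) ≤ weightedDist a w₀ (Φ w₀) * K ^ n := by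
    intro n
    induction n with
    | zero => simp [p]
    | succ n ih =>
      calc weightedDist a (p (n + 1)) (p (n + 1 + 1))
          = weightedDist a (Φ (p n)) (Φ (p (n + 1))) := by rw [hp_succ (n + 1), hp_succ n]
        _ ≤ K * weightedDist a (p n) (p (n + 1)) := hΦ _ (hpX n) _ (hpX (n + 1))
        _ ≤ K * (weightedDist a w₀ (Φ w₀) * K ^ n) := by gcongr
        _ = weightedDist a w₀ (Φ w₀) * K ^ (n + 1) := by ring
  have hp : CauchySeq p := cauchySeq_of_le_geometric K ((a⁻¹ + 1) * weightedDist a w₀ (Φ w₀)) hK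
    fun n => (dist_le_mul_weightedDist ha _ _).trans <| by rw [mul_assoc]; gcongr; exact hstep n
  obtain ⟨w, hw⟩ := cauchySeq_tendsto_of_complete hp
  have hwX : w ∈ X := hX.mem_of_tendsto hw (Eventually.of_forall hpX)
  refine ⟨w, hwX, tendsto_nhds_unique ?_ ((tendsto_add_atTop_iff_nat 1).2 hw)⟩
  have hΦp : Tendsto (fun n => Φ (p n)) atTop (𝓝 (Φ w)) :=
    (hΦc w hwX).tendsto.comp (tendsto_nhdsWithin_iff.2 ⟨hw, Eventually.of_forall hpX⟩)
  simpa only [hp_succ] using hΦp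

end WeightedDist

lemma exists_norm_eq_one_mul_eq_norm (p : ℂ) : ∃ c : ℂ, ‖c‖ = 1 ∧ c * p = ‖p‖ := by
  rcases eq_or_ne p 0 with rfl | hp
  · exact ⟨1, by simp⟩
  · refine ⟨‖p‖ / p, ?_, ?_⟩
    · rw [norm_div, Complex.norm_real, norm_norm, div_self (norm_ne_zero_iff.2 hp)]
    · field_simp

/-- Rotating `p` and `q` onto the positive real axis turns `a‖p‖ + ‖q‖` into the modulus of a
linear functional of norm at most one, so scalar estimates apply to pairs of functions. -/
lemma exists_combination_eq_weighted_norm {a : ℝ} (ha : 0 ≤ a) (p q : ℂ) :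
    ∃ c₁ c₂ : ℂ, (a : ℂ) * c₁ * p + c₂ * q = ((a * ‖p‖ + ‖q‖ : ℝ) : ℂ) ∧
      ∀ p' q' : ℂ, ‖(a : ℂ) * c₁ * p' + c₂ * q'‖ ≤ a * ‖p'‖ + ‖q'‖ := by
  obtain ⟨c₁, hc₁, hp⟩ := exists_norm_eq_one_mul_eq_norm p
  obtain ⟨c₂, hc₂, hq⟩ := exists_norm_eq_one_mul_eq_norm q
  refine ⟨c₁, c₂, ?_, fun p' q' => ?_⟩
  · push_cast
    rw [← hp, ← hq]
    ring
  · calc _ ≤ ‖(a : ℂ) * c₁ * p'‖ + ‖c₂ * q'‖ := norm_add_le _ _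
      _ = a * ‖p'‖ + ‖q'‖ := by simp [hc₁, hc₂, ha]

lemma weighted_norm_sub_le_of_norm_deriv_le {f g : ℂ → ℂ} {s : Set ℂ} (hs : Convex ℝ s)
    {a C : ℝ} (ha : 0 ≤ a) (hf : ∀ w ∈ s, DifferentiableAt ℂ f w)
    (hg : ∀ w ∈ s, DifferentiableAt ℂ g w)
    (hC : ∀ w ∈ s, a * ‖deriv f w‖ + ‖deriv g w‖ ≤ C) {x y : ℂ} (hx : x ∈ s) (hy : y ∈ s) :
    a * ‖f y - f x‖ + ‖g y - g x‖ ≤ C * ‖y - x‖ := by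
  obtain ⟨c₁, c₂, hc, hle⟩ := exists_combination_eq_weighted_norm ha (f y - f x) (g y - g x)
  set F : ℂ → ℂ := fun w => (a : ℂ) * c₁ * f w + c₂ * g w
  have hF : ∀ w ∈ s, HasDerivAt F ((a : ℂ) * c₁ * deriv f w + c₂ * deriv g w) w := fun w hw =>
    ((hf w hw).hasDerivAt.const_mul _).add ((hg w hw).hasDerivAt.const_mul _)
  have hmvt := hs.norm_image_sub_le_of_norm_deriv_le (fun w hw => (hF w hw).differentiableAt)
    (fun w hw => (hF w hw).deriv ▸ (hle _ _).trans (hC w hw)) hx hy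
  have hFyx : F y - F x = ((a * ‖f y - f x‖ + ‖g y - g x‖ : ℝ) : ℂ) := by
    rw [← hc]; ring
  rwa [hFyx, Complex.norm_of_nonneg (by positivity)] at hmvt

lemma weighted_norm_deriv_le_of_forall_mem_closedBall_le {f g : ℂ → ℂ} {c : ℂ} {a R M : ℝ}
    (ha : 0 ≤ a) (hR : 0 < R) (hf : ∀ w ∈ closedBall c R, DifferentiableAt ℂ f w)
    (hg : ∀ w ∈ closedBall c R, DifferentiableAt ℂ g w)
    (hM : ∀ w ∈ closedBall c R, a * ‖f w‖ + ‖g w‖ ≤ M) :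
    a * ‖deriv f c‖ + ‖deriv g c‖ ≤ M / R := by
  obtain ⟨c₁, c₂, hc, hle⟩ := exists_combination_eq_weighted_norm ha (deriv f c) (deriv g c)
  set F : ℂ → ℂ := fun w => (a : ℂ) * c₁ * f w + c₂ * g w
  have hF : ∀ w ∈ closedBall c R, HasDerivAt F ((a : ℂ) * c₁ * deriv f w + c₂ * deriv g w) w :=
    fun w hw => ((hf w hw).hasDerivAt.const_mul _).add ((hg w hw).hasDerivAt.const_mul _)
  have hFd : DifferentiableOn ℂ F (closedBall c R) := fun w hw =>
    (hF w hw).differentiableAt.differentiableWithinAt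
  have hcauchy := Complex.norm_deriv_le_of_forall_mem_sphere_norm_le hR
    (hFd.diffContOnCl_ball subset_rfl)
    (fun w hw => (hle _ _).trans (hM w (sphere_subset_closedBall hw)))
  rwa [(hF c (mem_closedBall_self hR.le)).deriv, hc, Complex.norm_of_nonneg (by positivity)]
    at hcauchy

lemma weightedDist_le_of_norm_le_of_norm_deriv_le {U V : ℂ → ℂ → ℂ} {x y : ℂ} {a A B R M L : ℝ}
    (ha : 0 ≤ a) (hR : 0 < R)
    (hU : AnalyticOnNhd ℂ (fun z : ℂ × ℂ => U z.1 z.2) (closedBall x (A + R) ×ˢ closedBall y B))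
    (hV : AnalyticOnNhd ℂ (fun z : ℂ × ℂ => V z.1 z.2) (closedBall x (A + R) ×ˢ closedBall y B))
    (hM : ∀ z ∈ closedBall x (A + R) ×ˢ closedBall y B, a * ‖U z.1 z.2‖ + ‖V z.1 z.2‖ ≤ M)
    (hL : ∀ z ∈ closedBall x A ×ˢ closedBall y B,
      a * ‖deriv (fun w => U z.1 w) z.2‖ + ‖deriv (fun w => V z.1 w) z.2‖ ≤ L)
    {w w' : ℂ × ℂ} (hw : w ∈ closedBall x A ×ˢ closedBall y B)
    (hw' : w' ∈ closedBall x A ×ˢ closedBall y B) :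
    weightedDist a (U w.1 w.2, V w.1 w.2) (U w'.1 w'.2, V w'.1 w'.2) ≤
      M / R * ‖w.1 - w'.1‖ + L * ‖w.2 - w'.2‖ := by
  have hXY : closedBall x A ×ˢ closedBall y B ⊆ closedBall x (A + R) ×ˢ closedBall y B :=
    prod_mono (closedBall_subset_closedBall (by linarith)) subset_rfl
  have hderiv₁ : ∀ z ∈ closedBall x A ×ˢ closedBall y B,
      a * ‖deriv (fun ξ => U ξ z.2) z.1‖ + ‖deriv (fun ξ => V ξ z.2) z.1‖ ≤ M / R := by
    rintro z ⟨hz₁, hz₂⟩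
    have hball : ∀ ξ ∈ closedBall z.1 R, (ξ, z.2) ∈ closedBall x (A + R) ×ˢ closedBall y B :=
      fun ξ hξ => ⟨closedBall_subset_closedBall' (by rw [add_comm]; gcongr; exact hz₁) hξ, hz₂⟩
    exact weighted_norm_deriv_le_of_forall_mem_closedBall_le ha hR
      (fun ξ hξ => (hU _ (hball ξ hξ)).curry_left.differentiableAt)
      (fun ξ hξ => (hV _ (hball ξ hξ)).curry_left.differentiableAt)
      (fun ξ hξ => hM _ (hball ξ hξ))
  have hstep₁ : a * ‖U w.1 w.2 - U w'.1 w.2‖ + ‖V w.1 w.2 - V w'.1 w.2‖ ≤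
      M / R * ‖w.1 - w'.1‖ := by
    have hslice : ∀ ξ ∈ closedBall x A, (ξ, w.2) ∈ closedBall x A ×ˢ closedBall y B :=
      fun ξ hξ => ⟨hξ, hw.2⟩
    exact weighted_norm_sub_le_of_norm_deriv_le (f := fun ξ => U ξ w.2) (g := fun ξ => V ξ w.2)
      (convex_closedBall x A) ha
      (fun ξ hξ => (hU _ (hXY (hslice ξ hξ))).curry_left.differentiableAt)
      (fun ξ hξ => (hV _ (hXY (hslice ξ hξ))).curry_left.differentiableAt)
      (fun ξ hξ => hderiv₁ _ (hslice ξ hξ)) hw'.1 hw.1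
  have hstep₂ : a * ‖U w'.1 w.2 - U w'.1 w'.2‖ + ‖V w'.1 w.2 - V w'.1 w'.2‖ ≤
      L * ‖w.2 - w'.2‖ := by
    have hslice : ∀ η ∈ closedBall y B, (w'.1, η) ∈ closedBall x A ×ˢ closedBall y B :=
      fun η hη => ⟨hw'.1, hη⟩
    exact weighted_norm_sub_le_of_norm_deriv_le (f := U w'.1) (g := V w'.1)
      (convex_closedBall y B) ha
      (fun η hη => (hU _ (hXY (hslice η hη))).curry_right.differentiableAt)
      (fun η hη => (hV _ (hXY (hslice η hη))).curry_right.differentiableAt)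
      (fun η hη => hL _ (hslice η hη)) hw'.2 hw.2
  have htri_U := norm_sub_le_norm_sub_add_norm_sub (U w.1 w.2) (U w'.1 w.2) (U w'.1 w'.2)
  have htri_V := norm_sub_le_norm_sub_add_norm_sub (V w.1 w.2) (V w'.1 w.2) (V w'.1 w'.2)
  unfold weightedDist
  nlinarith

theorem exists_unique_solution_of_weighted_bounds {U V : ℂ → ℂ → ℂ} {x y : ℂ} {a R M K : ℝ}
    (ha : 0 < a) (hM : 0 ≤ M) (hR : 0 < R) (hK : K < 1)
    (hU : AnalyticOnNhd ℂ (fun z : ℂ × ℂ => U z.1 z.2)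
      (closedBall x (M / a + R) ×ˢ closedBall y M))
    (hV : AnalyticOnNhd ℂ (fun z : ℂ × ℂ => V z.1 z.2)
      (closedBall x (M / a + R) ×ˢ closedBall y M))
    (hUV : ∀ z ∈ closedBall x (M / a + R) ×ˢ closedBall y M,
      a * ‖U z.1 z.2‖ + ‖V z.1 z.2‖ ≤ M)
    (hUV₂ : ∀ z ∈ closedBall x (M / a) ×ˢ closedBall y M,
      a * ‖deriv (fun w => U z.1 w) z.2‖ + ‖deriv (fun w => V z.1 w) z.2‖ ≤ K)
    (hMR : M / R ≤ K * a) :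
    ∃ w ∈ closedBall x (M / a) ×ˢ closedBall y M,
      (x = w.1 + U w.1 w.2 ∧ y = w.2 + V w.1 w.2) ∧ a * ‖w.1 - x‖ + ‖w.2 - y‖ ≤ M ∧
      ∀ w' : ℂ × ℂ, a * ‖U w'.1 w'.2‖ + ‖V w'.1 w'.2‖ ≤ M →
        (x = w'.1 + U w'.1 w'.2 ∧ y = w'.2 + V w'.1 w'.2) → w' = w := by
  set X := closedBall x (M / a) ×ˢ closedBall y M
  have hXY : X ⊆ closedBall x (M / a + R) ×ˢ closedBall y M :=
    prod_mono (closedBall_subset_closedBall (by linarith)) subset_rfl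
  set Φ : ℂ × ℂ → ℂ × ℂ := fun w => (x - U w.1 w.2, y - V w.1 w.2)
  have hsolution : ∀ w : ℂ × ℂ, (x = w.1 + U w.1 w.2 ∧ y = w.2 + V w.1 w.2) ↔ Φ w = w := by
    simp only [Φ, Prod.ext_iff, sub_eq_iff_eq_add, implies_true]
  have hmaps : ∀ w : ℂ × ℂ, a * ‖U w.1 w.2‖ + ‖V w.1 w.2‖ ≤ M → Φ w ∈ X := by
    intro w hw
    refine ⟨?_, ?_⟩ <;> simp only [Φ, mem_closedBall, dist_eq_norm, sub_sub_cancel_left, norm_neg]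
    · rw [le_div_iff₀ ha]
      linarith [norm_nonneg (V w.1 w.2)]
    · nlinarith [norm_nonneg (U w.1 w.2)]
  have hcontr : ∀ w ∈ X, ∀ w' ∈ X, weightedDist a (Φ w) (Φ w') ≤ K * weightedDist a w w' := by
    intro w hw w' hw'
    have hLip := weightedDist_le_of_norm_le_of_norm_deriv_le ha.le hR hU hV hUV hUV₂ hw' hw
    calc weightedDist a (Φ w) (Φ w')
        = weightedDist a (U w'.1 w'.2, V w'.1 w'.2) (U w.1 w.2, V w.1 w.2) := by
          simp only [weightedDist, Φ, sub_sub_sub_cancel_left]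
      _ ≤ K * a * ‖w'.1 - w.1‖ + K * ‖w'.2 - w.2‖ := by
          nlinarith [norm_nonneg (w'.1 - w.1), norm_nonneg (w'.2 - w.2)]
      _ = K * weightedDist a w w' := by
          rw [weightedDist_comm, weightedDist]
          ring
  have hΦc : ContinuousOn Φ X := fun w hw =>
    ((continuousAt_const.sub (hU w (hXY hw)).continuousAt).prodMk
      (continuousAt_const.sub (hV w (hXY hw)).continuousAt)).continuousWithinAt
  have hK0 : 0 ≤ K := nonneg_of_mul_nonneg_left ((div_nonneg hM hR.le).trans hMR) ha
  obtain ⟨w, hwX, hfix⟩ := exists_fixedPoint_of_weightedDist_le ha hK0 hK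
    (isClosed_closedBall.prod isClosed_closedBall) (fun w hw => hmaps w (hUV w (hXY hw))) hΦc
    hcontr (⟨mem_closedBall_self (by positivity), mem_closedBall_self hM⟩ : (x, y) ∈ X)
  refine ⟨w, hwX, (hsolution w).2 hfix, ?_, fun w' hw' hsol' => ?_⟩
  · calc a * ‖w.1 - x‖ + ‖w.2 - y‖ = a * ‖U w.1 w.2‖ + ‖V w.1 w.2‖ := by
          conv_lhs => rw [← hfix]
          simp only [Φ, sub_sub_cancel_left, norm_neg]
      _ ≤ M := hUV w (hXY hwX)
  · have hfix' := (hsolution w').1 hsol'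
    have hw'X : w' ∈ X := hfix' ▸ hmaps w' hw'
    exact eq_of_weightedDist_le_mul ha hK (by simpa only [hfix, hfix'] using hcontr w' hw'X w hwX)

lemma mem_Dom_of_norm_sub_le {r ρ r' ρ' : ℝ} {c : ℂ} {z w : ℂ × ℂ} (hz : z ∈ Dom r ρ c)
    (h₁ : r + ‖w.1 - z.1‖ ≤ r') (h₂ : ρ + ‖w.2 - z.2‖ ≤ ρ') : w ∈ Dom r' ρ' c := by
  obtain ⟨hz₁, hz₂⟩ := hz
  have him : |w.1.im - z.1.im| ≤ ‖w.1 - z.1‖ := by simpa using Complex.abs_im_le_norm (w.1 - z.1)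
  exact ⟨by linarith [abs_sub_abs_le_abs_sub w.1.im z.1.im],
    by linarith [norm_sub_le_norm_sub_add_norm_sub w.2 z.2 c]⟩

theorem coordinate_change_invertible_general
    (ν κ γ r s rP sP ϑ : ℝ) (ωbar : ℂ) (u v : ℂ → ℂ → ℂ)
    (hγ0 : 0 < γ)
    (hrr : rP < r) (hsP : 0 < sP)
    (h7 : 7 * sP < s) (hsr : s < γ ^ κ / 6 * (r - rP))
    (hϑ0 : 0 ≤ ϑ) (hϑ : ϑ < 1 / 8)
    (hu : AnalyticOnNhd ℂ (fun z : ℂ × ℂ => u z.1 z.2)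
      (Dom (r - 3 * ((r - rP) / 6)) (γ ^ ν * (s - 3 * ((s - sP) / 6))) ωbar))
    (hv : AnalyticOnNhd ℂ (fun z : ℂ × ℂ => v z.1 z.2)
      (Dom (r - 3 * ((r - rP) / 6)) (γ ^ ν * (s - 3 * ((s - sP) / 6))) ωbar))
    (hb0 : ∀ z ∈ Dom (r - 3 * ((r - rP) / 6)) (γ ^ ν * (s - 3 * ((s - sP) / 6))) ωbar,
      γ ^ (ν + κ) * ‖u z.1 z.2‖ + ‖v z.1 z.2‖ ≤ γ ^ ν * ϑ * s)
    (hb2 : ∀ z ∈ Dom (r - 3 * ((r - rP) / 6)) (γ ^ ν * (s - 3 * ((s - sP) / 6))) ωbar,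
      γ ^ (ν + κ) * ‖deriv (fun w => u z.1 w) z.2‖ +
        ‖deriv (fun w => v z.1 w) z.2‖ ≤ ϑ) :
    ∀ z ∈ Dom (r - 4 * ((r - rP) / 6)) (γ ^ ν * (s - 4 * ((s - sP) / 6))) ωbar,
      ∃ w ∈ Dom (r - 3 * ((r - rP) / 6)) (γ ^ ν * (s - 3 * ((s - sP) / 6))) ωbar,
        (z.1 = w.1 + u w.1 w.2 ∧ z.2 = w.2 + v w.1 w.2) ∧
        (γ ^ (ν + κ) * ‖w.1 - z.1‖ + ‖w.2 - z.2‖ ≤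
          ϑ / (1 - ϑ) * (γ ^ ν * s)) ∧
        ∀ w' ∈ Dom (r - 3 * ((r - rP) / 6)) (γ ^ ν * (s - 3 * ((s - sP) / 6))) ωbar,
          (z.1 = w'.1 + u w'.1 w'.2 ∧ z.2 = w'.2 + v w'.1 w'.2) → w' = w := by
  intro z hz
  set δ := (r - rP) / 6
  set M := γ ^ ν * ϑ * s
  have hγc : γ ^ (ν + κ) = γ ^ ν * γ ^ κ := Real.rpow_add hγ0 ν κ
  have hγν : 0 < γ ^ ν := Real.rpow_pos_of_pos hγ0 ν
  have hγκ : 0 < γ ^ κ := Real.rpow_pos_of_pos hγ0 κ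
  have hδ : 0 < δ := by simp only [δ]; linarith
  have hs : 0 < s := by linarith
  have hϑs : 8 * (ϑ * s) ≤ γ ^ κ * δ := by
    have : s < γ ^ κ * δ := by simp only [δ]; linarith
    nlinarith
  have hXY : closedBall z.1 (M / γ ^ (ν + κ)) ×ˢ closedBall z.2 M ⊆
      closedBall z.1 (M / γ ^ (ν + κ) + 7 * δ / 8) ×ˢ closedBall z.2 M :=
    prod_mono (closedBall_subset_closedBall (by linarith)) subset_rfl
  have hYD : closedBall z.1 (M / γ ^ (ν + κ) + 7 * δ / 8) ×ˢ closedBall z.2 M ⊆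
      Dom (r - 3 * δ) (γ ^ ν * (s - 3 * ((s - sP) / 6))) ωbar := by
    rintro w ⟨hw₁, hw₂⟩
    rw [mem_closedBall, dist_eq_norm] at hw₁ hw₂
    have hMδ : M / γ ^ (ν + κ) ≤ δ / 8 := by
      rw [div_le_iff₀ (by positivity), hγc]
      nlinarith
    have hMρ : M ≤ γ ^ ν * ((s - sP) / 6) := by
      simp only [M, mul_assoc]
      gcongr
      nlinarith
    exact mem_Dom_of_norm_sub_le hz (by linarith) (by linarith)
  have hMR : M / (7 * δ / 8) ≤ 1 / 7 * γ ^ (ν + κ) := by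
    rw [div_le_iff₀ (by linarith), hγc]
    nlinarith
  obtain ⟨w, hwX, hsol, hbound, huniq⟩ := exists_unique_solution_of_weighted_bounds
    (by positivity) (by positivity) (by linarith) (by norm_num) (hu.mono hYD) (hv.mono hYD)
    (fun w hw => hb0 w (hYD hw)) (fun w hw => (hb2 w (hYD (hXY hw))).trans (by linarith)) hMR
  refine ⟨w, hYD (hXY hwX), hsol, hbound.trans ?_, fun w' hw' hsol' => huniq w' (hb0 w' hw') hsol'⟩
  calc M = ϑ * (γ ^ ν * s) := by ring
    _ ≤ ϑ / (1 - ϑ) * (γ ^ ν * s) := by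
      gcongr
      exact le_div_self hϑ0 (by linarith) (by linarith)

/-- Invertibility of the KAM coordinate change
`(ξ, η) ↦ (ξ + u(ξ,η), η + v(ξ,η))`: under the smallness bounds on `u, v` and their partial
derivatives on `D₃`, every `(x, y) ∈ D₄` comes from a unique `(ξ, η) ∈ D₃`, with the estimate
`γ^{ν+κ}|ξ - x| + |η - y| ≤ (ϑ/(1-ϑ)) γ^ν s`. -/
theorem coordinate_change_invertible
    (ν κ γ r s rP sP ϑ : ℝ) (ωbar : ℂ) (u v : ℂ → ℂ → ℂ)
    (hν : 0 ≤ ν) (hκ0 : 0 < κ) (hκ : κ < 1 / 2) (hγ0 : 0 < γ) (hγ1 : γ ≤ 1)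
    (hrP : 0 < rP) (hrr : rP < r) (hsP : 0 < sP)
    (h7 : 7 * sP < s) (hsr : s < γ ^ κ / 6 * (r - rP))
    (hϑ0 : 0 ≤ ϑ) (hϑ : ϑ < 1 / 8)
    (hu : AnalyticOnNhd ℂ (fun z : ℂ × ℂ => u z.1 z.2)
      (Dom (r - 3 * ((r - rP) / 6)) (γ ^ ν * (s - 3 * ((s - sP) / 6))) ωbar))
    (hv : AnalyticOnNhd ℂ (fun z : ℂ × ℂ => v z.1 z.2)
      (Dom (r - 3 * ((r - rP) / 6)) (γ ^ ν * (s - 3 * ((s - sP) / 6))) ωbar))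
    (huper : ∀ ξ η : ℂ, u (ξ + 2 * Real.pi) η = u ξ η)
    (hvper : ∀ ξ η : ℂ, v (ξ + 2 * Real.pi) η = v ξ η)
    (hb0 : ∀ z ∈ Dom (r - 3 * ((r - rP) / 6)) (γ ^ ν * (s - 3 * ((s - sP) / 6))) ωbar,
      γ ^ (ν + κ) * ‖u z.1 z.2‖ + ‖v z.1 z.2‖ ≤ γ ^ ν * ϑ * s)
    (hb1 : ∀ z ∈ Dom (r - 3 * ((r - rP) / 6)) (γ ^ ν * (s - 3 * ((s - sP) / 6))) ωbar,
      γ ^ (ν + κ) * ‖deriv (fun w => u w z.2) z.1‖ +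
        ‖deriv (fun w => v w z.2) z.1‖ ≤ γ ^ ν * ϑ)
    (hb2 : ∀ z ∈ Dom (r - 3 * ((r - rP) / 6)) (γ ^ ν * (s - 3 * ((s - sP) / 6))) ωbar,
      γ ^ (ν + κ) * ‖deriv (fun w => u z.1 w) z.2‖ +
        ‖deriv (fun w => v z.1 w) z.2‖ ≤ ϑ) :
    ∀ z ∈ Dom (r - 4 * ((r - rP) / 6)) (γ ^ ν * (s - 4 * ((s - sP) / 6))) ωbar,
      ∃ w ∈ Dom (r - 3 * ((r - rP) / 6)) (γ ^ ν * (s - 3 * ((s - sP) / 6))) ωbar,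
        (z.1 = w.1 + u w.1 w.2 ∧ z.2 = w.2 + v w.1 w.2) ∧
        (γ ^ (ν + κ) * ‖w.1 - z.1‖ + ‖w.2 - z.2‖ ≤
          ϑ / (1 - ϑ) * (γ ^ ν * s)) ∧
        ∀ w' ∈ Dom (r - 3 * ((r - rP) / 6)) (γ ^ ν * (s - 3 * ((s - sP) / 6))) ωbar,
          (z.1 = w'.1 + u w'.1 w'.2 ∧ z.2 = w'.2 + v w'.1 w'.2) → w' = w :=
  coordinate_change_invertible_general ν κ γ r s rP sP ϑ ωbar u v hγ0 hrr hsP h7 hsr hϑ0 hϑ hu hv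
    hb0 hb2
end

section
/- Let n ≥ 1 be an integer. Every solution of the planar autonomous system ẋ = y, ẏ = −x^{2n+1} with initial value (x(0), y(0)) ≠ (0, 0) is periodic. In particular, the solution (C(t), S(t)) with initial value (C(0), S(0)) = (1, 0) is periodic with some minimal period T* > 0. -/
/-!
The energy `(n + 1) y² + x^(2n+2)` is conserved, so every orbit stays in a compact ball, where
the polynomial vector field is Lipschitz; hence solutions are determined by their value at one
time. In particular the orbit is symmetric under time reversal about every zero `t₀` of `y`, and
composing the reflections about two zeros `t₀ < t₁` is the translation by `2 (t₁ - t₀)`, which is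
therefore a period. Such zeros exist after any time: if `y > 0` from some time on, `x` increases,
and either `x` stays `≤ 0`, so that `y` increases and `x` grows linearly, or `x` becomes positive,
so that `y` decreases linearly. For the minimal period, the periods of the nonconstant continuous
orbit form a subgroup of `ℝ` that is not dense, hence has a least positive element.
-/

open Set Function

open scoped NNReal

theorem le_one_add_pow {a : ℝ} (ha : 0 ≤ a) {k : ℕ} (hk : k ≠ 0) : a ≤ 1 + a ^ k := by
  rcases le_total a 1 with h | h
  · linarith [pow_nonneg ha k]
  · linarith [le_self_pow₀ h hk]

theorem exists_gt_of_le_hasDerivAt {f f' : ℝ → ℝ} {a c : ℝ} (hf : ∀ t, HasDerivAt f (f' t) t)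
    (hc : 0 < c) (hf' : ∀ t > a, c ≤ f' t) (M : ℝ) : ∃ t > a, M < f t := by
  have hgrowth := (convex_Ioi a).mul_sub_le_image_sub_of_le_deriv
    (fun t _ => (hf t).continuousAt.continuousWithinAt)
    (fun t _ => (hf t).differentiableAt.differentiableWithinAt)
    (fun t ht => (hf t).deriv ▸ hf' t (interior_Ioi.subset ht))
  set b := a + 1
  have hb : a < b := lt_add_one a
  set t := b + (|M - f b| + 1) / c
  have hbt : b ≤ t := le_add_of_nonneg_right (by positivity)
  have hct : c * (t - b) = |M - f b| + 1 := by simp only [t]; field_simp; ring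
  refine ⟨t, hb.trans_le hbt, ?_⟩
  linarith [hgrowth b hb t (hb.trans_le hbt) hbt, le_abs_self (M - f b)]

theorem eq_of_hasDerivAt_of_lipschitzOnWith {E : Type*} [NormedAddCommGroup E] [NormedSpace ℝ E]
    {v : E → E} {s : Set E} {K : ℝ≥0} (hv : LipschitzOnWith K v s) {f g : ℝ → E}
    (hf : ∀ t, HasDerivAt f (v (f t)) t ∧ f t ∈ s) (hg : ∀ t, HasDerivAt g (v (g t)) t ∧ g t ∈ s)
    {t₀ : ℝ} (h : f t₀ = g t₀) : f = g := by
  funext t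
  obtain ⟨hlt, hgt⟩ := abs_lt.1 (lt_add_one |t - t₀|)
  have ht₀ : t₀ ∈ Ioo (t₀ - (|t - t₀| + 1)) (t₀ + (|t - t₀| + 1)) := by
    constructor <;> linarith [abs_nonneg (t - t₀)]
  exact ODE_solution_unique_of_mem_Ioo (fun _ _ => hv) ht₀ (fun t _ => hf t) (fun t _ => hg t) h
    ⟨by linarith, by linarith⟩

def Function.periods {G α : Type*} [AddGroup G] (f : G → α) : AddSubgroup G where
  carrier := {c | Periodic f c}
  zero_mem' := by simp [Periodic]
  add_mem' := Periodic.add_period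
  neg_mem' := Periodic.neg

@[simp]
theorem Function.mem_periods {G α : Type*} [AddGroup G] {f : G → α} {c : G} :
    c ∈ periods f ↔ Periodic f c :=
  Iff.rfl

theorem Continuous.exists_isLeast_pos_period {α : Type*} [TopologicalSpace α] [T2Space α]
    {f : ℝ → α} (hf : Continuous f) (hf_ne : ¬ ∀ t, f t = f 0) {T : ℝ} (hT : Periodic f T)
    (hT0 : T ≠ 0) : ∃ T₀, IsLeast {c | 0 < c ∧ Periodic f c} T₀ := by
  by_contra hmin
  have hbot : periods f ≠ ⊥ := fun h => hT0 <| by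
    simpa [h] using (mem_periods.2 hT : T ∈ periods f)
  have hdense := AddSubgroup.dense_of_no_min (periods f) hbot (by simpa [and_comm] using hmin)
  have hconst := hf.ext_on hdense continuous_const fun c hc => by simpa using hc 0
  exact hf_ne (congrFun hconst)

structure IsDuffingSolution (n : ℕ) (x y : ℝ → ℝ) : Prop where
  hasDerivAt_x : ∀ t, HasDerivAt x (y t) t
  hasDerivAt_y : ∀ t, HasDerivAt y (-(x t ^ (2 * n + 1))) t

def duffingField (n : ℕ) (p : ℝ × ℝ) : ℝ × ℝ := (p.2, -(p.1 ^ (2 * n + 1)))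

theorem contDiff_duffingField (n : ℕ) : ContDiff ℝ 1 (duffingField n) :=
  contDiff_snd.prodMk (contDiff_fst.pow _).neg

namespace IsDuffingSolution

variable {n : ℕ} {x y u w : ℝ → ℝ}

theorem hasDerivAt_prod (h : IsDuffingSolution n x y) (t : ℝ) :
    HasDerivAt (fun t => (x t, y t)) (duffingField n (x t, y t)) t :=
  (h.hasDerivAt_x t).prodMk (h.hasDerivAt_y t)

theorem continuous (h : IsDuffingSolution n x y) : Continuous fun t => (x t, y t) :=
  continuous_iff_continuousAt.2 fun t => (h.hasDerivAt_prod t).continuousAt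

theorem neg (h : IsDuffingSolution n x y) : IsDuffingSolution n (-x) (-y) where
  hasDerivAt_x t := (h.hasDerivAt_x t).neg
  hasDerivAt_y t := by
    simpa [(Odd.neg_pow ⟨n, rfl⟩ (x t))] using (h.hasDerivAt_y t).neg

theorem reflect (h : IsDuffingSolution n x y) (c : ℝ) :
    IsDuffingSolution n (fun t => x (c - t)) (fun t => -y (c - t)) where
  hasDerivAt_x t := by
    simpa [comp_def] using (h.hasDerivAt_x (c - t)).comp t ((hasDerivAt_id t).const_sub c)
  hasDerivAt_y t := by
    simpa [comp_def] using ((h.hasDerivAt_y (c - t)).comp t ((hasDerivAt_id t).const_sub c)).fun_neg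

theorem energy_eq (h : IsDuffingSolution n x y) (t : ℝ) :
    (n + 1) * y t ^ 2 + x t ^ (2 * n + 2) = (n + 1) * y 0 ^ 2 + x 0 ^ (2 * n + 2) := by
  have hE : ∀ t, HasDerivAt (fun t => (n + 1 : ℝ) * y t ^ 2 + x t ^ (2 * n + 2)) 0 t := by
    intro t
    refine ((((h.hasDerivAt_y t).pow 2).const_mul ((n : ℝ) + 1)).add
      ((h.hasDerivAt_x t).pow (2 * n + 2))).congr_deriv ?_
    rw [show 2 * n + 2 - 1 = 2 * n + 1 by omega]
    push_cast
    ring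
  exact is_const_of_deriv_eq_zero (fun s => (hE s).differentiableAt) (fun s => (hE s).deriv) t 0

theorem exists_norm_le (h : IsDuffingSolution n x y) : ∃ R, ∀ t, ‖(x t, y t)‖ ≤ R := by
  refine ⟨1 + ((n + 1) * y 0 ^ 2 + x 0 ^ (2 * n + 2)), fun t => ?_⟩
  have hE := h.energy_eq t
  have hxE : |x t| ^ (2 * n + 2) = x t ^ (2 * n + 2) := Even.pow_abs ⟨n + 1, by ring⟩ _
  have hyE : |y t| ^ 2 = y t ^ 2 := sq_abs _
  have hx := le_one_add_pow (abs_nonneg (x t)) (by omega : 2 * n + 2 ≠ 0)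
  have hy := le_one_add_pow (abs_nonneg (y t)) two_ne_zero
  have : 0 ≤ x t ^ (2 * n + 2) := hxE ▸ by positivity
  have : 0 ≤ (n : ℝ) * y t ^ 2 := by positivity
  rw [Prod.norm_mk, Real.norm_eq_abs, Real.norm_eq_abs, max_le_iff]
  constructor <;> nlinarith

theorem eq_of_eq (h₁ : IsDuffingSolution n x y) (h₂ : IsDuffingSolution n u w) {t₀ : ℝ}
    (hx : x t₀ = u t₀) (hy : y t₀ = w t₀) : x = u ∧ y = w := by
  obtain ⟨R₁, hR₁⟩ := h₁.exists_norm_le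
  obtain ⟨R₂, hR₂⟩ := h₂.exists_norm_le
  obtain ⟨K, hK⟩ := (contDiff_duffingField n).contDiffOn.exists_lipschitzOnWith one_ne_zero
    (convex_closedBall 0 (max R₁ R₂)) (isCompact_closedBall 0 (max R₁ R₂))
  have heq := eq_of_hasDerivAt_of_lipschitzOnWith hK
    (fun t => ⟨h₁.hasDerivAt_prod t, mem_closedBall_zero_iff.2 ((hR₁ t).trans (le_max_left _ _))⟩)
    (fun t => ⟨h₂.hasDerivAt_prod t, mem_closedBall_zero_iff.2 ((hR₂ t).trans (le_max_right _ _))⟩)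
    (Prod.ext hx hy)
  exact ⟨funext fun t => congrArg Prod.fst (congrFun heq t),
    funext fun t => congrArg Prod.snd (congrFun heq t)⟩

theorem fst_eq_zero_of_forall_eq (h : IsDuffingSolution n x y)
    (hc : ∀ t, (x t, y t) = (x 0, y 0)) : x 0 = 0 := by
  have hy : y = fun _ => y 0 := funext fun t => congrArg Prod.snd (hc t)
  have h0 := h.hasDerivAt_y 0
  rw [hy] at h0
  exact pow_eq_zero_iff (Nat.succ_ne_zero _) |>.1 (neg_eq_zero.1 (h0.unique (hasDerivAt_const 0 _)))

theorem symm_of_snd_eq_zero (h : IsDuffingSolution n x y) {t₀ : ℝ} (h₀ : y t₀ = 0) (t : ℝ) :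
    x (2 * t₀ - t) = x t ∧ y (2 * t₀ - t) = -y t := by
  have ht₀ : 2 * t₀ - t₀ = t₀ := by ring
  obtain ⟨hx, hy⟩ := (h.reflect (2 * t₀)).eq_of_eq h (t₀ := t₀) (by simp only [ht₀])
    (by simp only [ht₀, h₀, neg_zero])
  exact ⟨congrFun hx t, by rw [← congrFun hy t, neg_neg]⟩

theorem periodic_of_snd_eq_zero (h : IsDuffingSolution n x y) {t₀ t₁ : ℝ} (h₀ : y t₀ = 0)
    (h₁ : y t₁ = 0) : Periodic (fun t => (x t, y t)) (2 * (t₁ - t₀)) := by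
  intro t
  obtain ⟨hx₀, hy₀⟩ := h.symm_of_snd_eq_zero h₀ t
  obtain ⟨hx₁, hy₁⟩ := h.symm_of_snd_eq_zero h₁ (2 * t₀ - t)
  dsimp only
  rw [show t + 2 * (t₁ - t₀) = 2 * t₁ - (2 * t₀ - t) by ring, hx₁, hy₁, hx₀, hy₀, neg_neg]

theorem not_forall_snd_pos (h : IsDuffingSolution n x y) (a : ℝ) : ¬ ∀ t > a, 0 < y t := by
  intro hpos
  by_cases hx : ∃ t₁ > a, 0 < x t₁
  · obtain ⟨t₁, ht₁, hx₁⟩ := hx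
    have hmono : MonotoneOn x (Ici t₁) :=
      monotoneOn_of_hasDerivWithinAt_nonneg (convex_Ici t₁)
        (fun t _ => (h.hasDerivAt_x t).continuousAt.continuousWithinAt)
        (fun t _ => (h.hasDerivAt_x t).hasDerivWithinAt)
        (fun t ht => (hpos t (ht₁.trans (interior_Ici.subset ht))).le)
    obtain ⟨t, ht, hyt⟩ := exists_gt_of_le_hasDerivAt (fun t => (h.hasDerivAt_y t).neg)
      (pow_pos hx₁ (2 * n + 1)) (a := t₁) (fun t ht => by
        rw [neg_neg]
        exact pow_le_pow_left₀ hx₁.le (hmono self_mem_Ici (mem_Ici.2 ht.le) ht.le) _) 0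
    rw [Pi.neg_apply, neg_pos] at hyt
    exact (hpos t (ht₁.trans ht)).not_gt hyt
  · push Not at hx
    have hmono : MonotoneOn y (Ici (a + 1)) :=
      monotoneOn_of_hasDerivWithinAt_nonneg (convex_Ici (a + 1))
        (fun t _ => (h.hasDerivAt_y t).continuousAt.continuousWithinAt)
        (fun t _ => (h.hasDerivAt_y t).hasDerivWithinAt)
        (fun t ht => neg_nonneg.2 ((Odd.pow_nonpos ⟨n, rfl⟩) (hx t (by
          linarith [mem_Ioi.1 (interior_Ici.subset ht)]))))
    obtain ⟨t, ht, hxt⟩ := exists_gt_of_le_hasDerivAt h.hasDerivAt_x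
      (hpos (a + 1) (lt_add_one a)) (a := a + 1)
      (fun t ht => hmono self_mem_Ici (mem_Ici.2 ht.le) ht.le) 0
    linarith [hx t (by linarith)]

theorem exists_snd_eq_zero (h : IsDuffingSolution n x y) (a : ℝ) : ∃ t > a, y t = 0 := by
  by_contra! hne
  rcases isPreconnected_Ioi.mapsTo_Ioi_or_Iio
    (fun t _ => (h.hasDerivAt_y t).continuousAt.continuousWithinAt) hne with hpos | hneg
  · exact h.not_forall_snd_pos a hpos
  · exact h.neg.not_forall_snd_pos a fun t ht => neg_pos.2 (hneg ht)

theorem exists_periodic (h : IsDuffingSolution n x y) :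
    ∃ T > 0, Periodic (fun t => (x t, y t)) T := by
  obtain ⟨t₀, -, h₀⟩ := h.exists_snd_eq_zero 0
  obtain ⟨t₁, ht, h₁⟩ := h.exists_snd_eq_zero t₀
  exact ⟨2 * (t₁ - t₀), by linarith, h.periodic_of_snd_eq_zero h₀ h₁⟩

end IsDuffingSolution

theorem autonomous_duffing_periodic_general (n : ℕ) :
    (∀ x y : ℝ → ℝ,
      (∀ t, HasDerivAt x (y t) t) →
      (∀ t, HasDerivAt y (-(x t ^ (2 * n + 1))) t) →
      (x 0, y 0) ≠ (0, 0) →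
      ∃ T > (0 : ℝ), ∀ t, x (t + T) = x t ∧ y (t + T) = y t) ∧
    ∀ C S : ℝ → ℝ,
      (∀ t, HasDerivAt C (S t) t) →
      (∀ t, HasDerivAt S (-(C t ^ (2 * n + 1))) t) →
      C 0 = 1 → S 0 = 0 →
      ∃ Tstar > (0 : ℝ),
        (∀ t, C (t + Tstar) = C t ∧ S (t + Tstar) = S t) ∧
        ∀ T > (0 : ℝ), (∀ t, C (t + T) = C t ∧ S (t + T) = S t) → Tstar ≤ T := by
  refine ⟨fun x y hx hy _ => ?_, fun C S hC hS hC0 _ => ?_⟩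
  · obtain ⟨T, hT, hper⟩ := IsDuffingSolution.exists_periodic ⟨hx, hy⟩
    exact ⟨T, hT, fun t => Prod.ext_iff.1 (hper t)⟩
  · have h : IsDuffingSolution n C S := ⟨hC, hS⟩
    obtain ⟨T, hT, hper⟩ := h.exists_periodic
    have hne : ¬ ∀ t, (C t, S t) = (C 0, S 0) := fun hc =>
      one_ne_zero (hC0 ▸ h.fst_eq_zero_of_forall_eq hc)
    obtain ⟨Tstar, ⟨hpos, hTstar⟩, hleast⟩ := h.continuous.exists_isLeast_pos_period hne hper hT.ne'
    exact ⟨Tstar, hpos, fun t => Prod.ext_iff.1 (hTstar t),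
      fun T hT hperT => hleast ⟨hT, fun t => Prod.ext (hperT t).1 (hperT t).2⟩⟩

/-- Every solution of `ẋ = y, ẏ = -x^{2n+1}` with nonzero initial value is
periodic; in particular the solution `(C, S)` with `(C(0), S(0)) = (1, 0)` is periodic with
a minimal period `T* > 0`. -/
theorem autonomous_duffing_periodic (n : ℕ) (hn : 1 ≤ n) :
    (∀ x y : ℝ → ℝ,
      (∀ t, HasDerivAt x (y t) t) →
      (∀ t, HasDerivAt y (-(x t ^ (2 * n + 1))) t) →
      (x 0, y 0) ≠ (0, 0) →
      ∃ T > (0 : ℝ), ∀ t, x (t + T) = x t ∧ y (t + T) = y t) ∧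
    ∀ C S : ℝ → ℝ,
      (∀ t, HasDerivAt C (S t) t) →
      (∀ t, HasDerivAt S (-(C t ^ (2 * n + 1))) t) →
      C 0 = 1 → S 0 = 0 →
      ∃ Tstar > (0 : ℝ),
        (∀ t, C (t + Tstar) = C t ∧ S (t + Tstar) = S t) ∧
        ∀ T > (0 : ℝ), (∀ t, C (t + T) = C t ∧ S (t + T) = S t) → Tstar ≤ T :=
  autonomous_duffing_periodic_general n
end
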